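/- arXiv:2208.07252 — 3 statements merged into one kernel-verified Lean document; each statement's English description precedes it below -/
import Mathlib

section
/- Fix m ∈ {0,1,2} and rates α, β, γ > 0 with 2α ≥ min(β, γ), together with positive constants c_β, c_γ, A, B, D. For ε ∈ (0, e⁻¹) define the number of interpolation nodes n(ε) = ⌈A ε^{-1/(4-m)}⌉, the number of levels L(ε) = ⌈(1/α) ln(B (n(ε)-1)^m / ε)⌉, and, for 0 ≤ l ≤ L(ε), the sample sizes N_l(ε) = ⌈(D · c(n(ε)) · (n(ε)-1)^{2m} / ε²) · √(c_β e^{-βl}/(c_γ e^{γl})) · Σ_{k=0}^{L(ε)} √(c_β e^{-βk} c_γ e^{γk})⌉, where c(n) = 2π( ln(n+1) + √(8/π) Σ_{k=2}^{n+1} k^{-2} (ln k)^{-1/2} ). Then there exists a constant C > 0 such that for all ε ∈ (0, e⁻¹) the total cost Σ_{l=0}^{L(ε)} N_l(ε) · c_γ e^{γl} is bounded by C · ln(ε⁻¹) · ε^{-2 - 2m/(4-m)} · E(ε), where E(ε) = 1 if β > γ, E(ε) = (ln(ε⁻¹))² if β = γ, and E(ε) = ε^{4(β-γ)/(α(4-m))}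 if β < γ. -/
open Real Finset

/-- The constant `c(n)` from Linde/Giles appearing in the a priori statistical error bound. -/
noncomputable def cConst (n : ℕ) : ℝ :=
  2 * Real.pi * (Real.log (n + 1) +
    Real.sqrt (8 / Real.pi) *
      ∑ k ∈ Finset.Icc 2 (n + 1), ((k : ℝ) ^ 2)⁻¹ * (Real.log k) ^ (-(1 : ℝ) / 2))

/-- The optimal number of interpolation nodes `n(ε) = ⌈A ε^{-1/(4-m)}⌉`. -/
noncomputable def nNodes (m : ℕ) (A ε : ℝ) : ℕ :=
  ⌈A * ε ^ (-(1 : ℝ) / (4 - (m : ℝ)))⌉₊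

/-- The optimal number of levels `L(ε) = ⌈(1/α) ln(B (n(ε)-1)^m / ε)⌉`. -/
noncomputable def nLevels (m : ℕ) (α A B ε : ℝ) : ℕ :=
  ⌈(1 / α) * Real.log (B * ((nNodes m A ε : ℝ) - 1) ^ m / ε)⌉₊

/-- The optimal level-wise sample sizes `N_l(ε)`. -/
noncomputable def nSamples (m : ℕ) (α β γ cβ cγ A B D ε : ℝ) (l : ℕ) : ℕ :=
  ⌈(D * cConst (nNodes m A ε) * ((nNodes m A ε : ℝ) - 1) ^ (2 * m) / ε ^ 2) *
      Real.sqrt (cβ * Real.exp (-β * l) / (cγ * Real.exp (γ * l))) *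
      ∑ k ∈ Finset.range (nLevels m α A B ε + 1),
        Real.sqrt (cβ * Real.exp (-β * k) * (cγ * Real.exp (γ * k)))⌉₊

lemma sum_invsq (n : ℕ) : ∑ k ∈ Finset.Icc 2 (n+1), ((k:ℝ)^2)⁻¹ ≤ 1 := by
  have h : ∀ n : ℕ, ∑ k ∈ Finset.Icc 2 (n+1), ((k:ℝ)^2)⁻¹ ≤ 1 - 1/(n+1) := by
    intro n
    induction n with
    | zero => simp
    | succ n ih =>
      rw [show n + 1 + 1 = (n+1) + 1 from rfl, Finset.sum_Icc_succ_top (by omega)]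
      have hp1 : (0:ℝ) < (n:ℝ)+1 := by positivity
      have hp2 : (0:ℝ) < (n:ℝ)+1+1 := by positivity
      have h1 : (((n:ℝ)+1+1)^2)⁻¹ ≤ 1/((n:ℝ)+1) - 1/((n:ℝ)+1+1) := by
        have he : 1/((n:ℝ)+1) - 1/((n:ℝ)+1+1) = (((n:ℝ)+1)*((n:ℝ)+1+1))⁻¹ := by
          field_simp; ring
        rw [he]
        apply inv_anti₀ (by positivity)
        nlinarith
      push_cast
      push_cast at ih
      linarith
  calc _ ≤ 1 - 1/((n:ℝ)+1) := h n
    _ ≤ 1 := by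
      have : 0 < 1/((n:ℝ)+1) := by positivity
      linarith

lemma cConst_nonneg (n : ℕ) : 0 ≤ cConst n := by
  unfold cConst
  have h1 : 0 ≤ Real.log (n+1) := Real.log_nonneg (by push_cast; linarith)
  have h2 : (0:ℝ) ≤ ∑ k ∈ Finset.Icc 2 (n + 1), ((k : ℝ) ^ 2)⁻¹ * (Real.log k) ^ (-(1 : ℝ) / 2) := by
    apply Finset.sum_nonneg
    intro k hk
    have : (0:ℝ) ≤ Real.log k := Real.log_nonneg (by
      simp only [Finset.mem_Icc] at hk
      have : (2:ℝ) ≤ k := by exact_mod_cast hk.1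
      linarith)
    positivity
  have := Real.pi_pos
  positivity

lemma cConst_le (n : ℕ) :
    cConst n ≤ 2 * Real.pi * (Real.log (n+1) + Real.sqrt (8/Real.pi) * (Real.log 2) ^ (-(1:ℝ)/2)) := by
  unfold cConst
  have hpi := Real.pi_pos
  have hsum : ∑ k ∈ Finset.Icc 2 (n + 1), ((k : ℝ) ^ 2)⁻¹ * (Real.log k) ^ (-(1 : ℝ) / 2)
      ≤ (Real.log 2) ^ (-(1:ℝ)/2) := by
    calc ∑ k ∈ Finset.Icc 2 (n + 1), ((k : ℝ) ^ 2)⁻¹ * (Real.log k) ^ (-(1 : ℝ) / 2)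
        ≤ ∑ k ∈ Finset.Icc 2 (n + 1), ((k : ℝ) ^ 2)⁻¹ * (Real.log 2) ^ (-(1:ℝ)/2) := by
          apply Finset.sum_le_sum
          intro k hk
          simp only [Finset.mem_Icc] at hk
          have h2k : (2:ℝ) ≤ k := by exact_mod_cast hk.1
          have hl2 : (0:ℝ) < Real.log 2 := Real.log_pos (by norm_num)
          have hlk : Real.log 2 ≤ Real.log k := Real.log_le_log (by norm_num) h2k
          apply mul_le_mul_of_nonneg_left _ (by positivity)
          rw [neg_div, Real.rpow_neg (by linarith), Real.rpow_neg (le_of_lt hl2)]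
          apply inv_anti₀ (Real.rpow_pos_of_pos hl2 _)
          exact Real.rpow_le_rpow (le_of_lt hl2) hlk (by norm_num)
      _ = (∑ k ∈ Finset.Icc 2 (n + 1), ((k : ℝ) ^ 2)⁻¹) * (Real.log 2) ^ (-(1:ℝ)/2) := by
          rw [Finset.sum_mul]
      _ ≤ 1 * (Real.log 2) ^ (-(1:ℝ)/2) := by
          apply mul_le_mul_of_nonneg_right (sum_invsq n)
          have hl2 : (0:ℝ) < Real.log 2 := Real.log_pos (by norm_num)
          positivity
      _ = (Real.log 2) ^ (-(1:ℝ)/2) := one_mul _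
  have h8 : (0:ℝ) ≤ Real.sqrt (8/Real.pi) := Real.sqrt_nonneg _
  nlinarith [mul_le_mul_of_nonneg_left hsum h8]

lemma geom_le_one (x : ℝ) (h0 : 0 ≤ x) (h1 : x < 1) (n : ℕ) :
    ∑ l ∈ Finset.range n, x^l ≤ 1/(1-x) := by
  rw [geom_sum_eq (by linarith) n, show (x^n - 1)/(x-1) = (1 - x^n)/(1-x) by
    rw [← neg_div_neg_eq]; ring_nf]
  have hxn : 0 ≤ x^n := pow_nonneg h0 n
  gcongr
  · linarith

lemma geom_gt_one (x : ℝ) (h : 1 < x) (n : ℕ) :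
    ∑ l ∈ Finset.range n, x^l ≤ x^n/(x-1) := by
  rw [geom_sum_eq (by linarith) n]
  gcongr
  · linarith

lemma sqrt_exp' (x : ℝ) : Real.sqrt (Real.exp x) = Real.exp (x/2) := by
  rw [show Real.exp x = (Real.exp (x/2))^2 by rw [← Real.exp_nat_mul]; ring_nf,
    Real.sqrt_sq (Real.exp_nonneg _)]

lemma ceil_le_max (x : ℝ) : (⌈x⌉₊ : ℝ) ≤ max 0 x + 1 := by
  rcases le_or_gt 0 x with h | h
  · rw [max_eq_right h]; exact le_of_lt (Nat.ceil_lt_add_one h)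
  · rw [Nat.ceil_eq_zero.mpr (le_of_lt h), max_eq_left (le_of_lt h)]; norm_num
section helpers
variable {m : ℕ} {α A B ε : ℝ}

lemma e1_one_le (hε0 : 0 < ε) (hε1 : ε ≤ 1) (hm3 : (m:ℝ) ≤ 2) :
    1 ≤ ε ^ (-(1:ℝ)/(4-(m:ℝ))) := by
  have hσ : (0:ℝ) < 4 - (m:ℝ) := by linarith
  exact Real.one_le_rpow_of_pos_of_le_one_of_nonpos hε0 hε1
    (div_nonpos_of_nonpos_of_nonneg (by norm_num) (by linarith))

lemma nNodes_one_le (hA : 0 < A) (hε0 : 0 < ε) (hε1 : ε ≤ 1) (hm3 : (m:ℝ) ≤ 2) :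
    1 ≤ nNodes m A ε := by
  have h1 := e1_one_le (m := m) hε0 hε1 hm3
  have : (0:ℝ) < A * ε ^ (-(1:ℝ)/(4-(m:ℝ))) := by nlinarith
  exact Nat.one_le_iff_ne_zero.mpr (by
    simp only [nNodes, ne_eq, Nat.ceil_eq_zero, not_le]
    exact this)

lemma nNodes_le (hA : 0 < A) (hε0 : 0 < ε) (hε1 : ε ≤ 1) (hm3 : (m:ℝ) ≤ 2) :
    ((nNodes m A ε : ℝ) - 1) ≤ A * ε ^ (-(1:ℝ)/(4-(m:ℝ))) := by
  have h1 := e1_one_le (m := m) hε0 hε1 hm3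
  have h0 : (0:ℝ) ≤ A * ε ^ (-(1:ℝ)/(4-(m:ℝ))) := by nlinarith
  have := Nat.ceil_lt_add_one h0
  simp only [nNodes]
  linarith [Nat.ceil_lt_add_one h0]

lemma nNodes_pow_le (hA : 0 < A) (hε0 : 0 < ε) (hε1 : ε ≤ 1) (hm3 : (m:ℝ) ≤ 2) :
    ((nNodes m A ε : ℝ) - 1) ^ m ≤ A ^ m * ε ^ (-(m:ℝ)/(4-(m:ℝ))) := by
  have hσ : (0:ℝ) < 4 - (m:ℝ) := by linarith
  have hn1 := nNodes_one_le hA hε0 hε1 hm3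
  have hge : (0:ℝ) ≤ (nNodes m A ε : ℝ) - 1 := by
    have : (1:ℝ) ≤ (nNodes m A ε : ℝ) := by exact_mod_cast hn1
    linarith
  calc ((nNodes m A ε : ℝ) - 1) ^ m ≤ (A * ε ^ (-(1:ℝ)/(4-(m:ℝ)))) ^ m :=
        pow_le_pow_left₀ hge (nNodes_le hA hε0 hε1 hm3) m
    _ = A ^ m * (ε ^ (-(1:ℝ)/(4-(m:ℝ)))) ^ m := mul_pow _ _ _
    _ = A ^ m * ε ^ (-(m:ℝ)/(4-(m:ℝ))) := by
        rw [← Real.rpow_natCast (ε ^ (-(1:ℝ)/(4-(m:ℝ)))) m, ← Real.rpow_mul hε0.le,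
          show (-(1:ℝ)/(4-(m:ℝ))) * (m:ℝ) = -(m:ℝ)/(4-(m:ℝ)) by ring]

/-- the main quantity controlling `nLevels`. -/
lemma P_le (hA : 0 < A) (hB : 0 < B) (hε0 : 0 < ε) (hε1 : ε ≤ 1) (hm3 : (m:ℝ) ≤ 2) :
    B * ((nNodes m A ε : ℝ) - 1) ^ m / ε ≤ B * A ^ m * ε ^ (-(4:ℝ)/(4-(m:ℝ))) := by
  have hσ : (0:ℝ) < 4 - (m:ℝ) := by linarith
  have h := nNodes_pow_le hA hε0 hε1 hm3
  have key : ε ^ (-(m:ℝ)/(4-(m:ℝ))) * ε⁻¹ = ε ^ (-(4:ℝ)/(4-(m:ℝ))) := by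
    rw [← Real.rpow_neg_one ε, ← Real.rpow_add hε0,
      show (-(m:ℝ)/(4-(m:ℝ)) + (-1)) = -(4:ℝ)/(4-(m:ℝ)) by field_simp; ring]
  calc B * ((nNodes m A ε : ℝ) - 1) ^ m / ε = B * (((nNodes m A ε : ℝ) - 1) ^ m * ε⁻¹) := by
        ring
    _ ≤ B * (A ^ m * ε ^ (-(m:ℝ)/(4-(m:ℝ))) * ε⁻¹) := by
        apply mul_le_mul_of_nonneg_left _ hB.le
        apply mul_le_mul_of_nonneg_right h (by positivity)
    _ = B * A ^ m * (ε ^ (-(m:ℝ)/(4-(m:ℝ))) * ε⁻¹) := by ring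
    _ = B * A ^ m * ε ^ (-(4:ℝ)/(4-(m:ℝ))) := by rw [key]

lemma expL_le (hα : 0 < α) (hA : 0 < A) (hB : 0 < B) (hε0 : 0 < ε) (hε1 : ε ≤ 1)
    (hm3 : (m:ℝ) ≤ 2) :
    Real.exp (α * (nLevels m α A B ε)) ≤
      Real.exp α * max 1 (B * A ^ m) * ε ^ (-(4:ℝ)/(4-(m:ℝ))) := by
  have hσ : (0:ℝ) < 4 - (m:ℝ) := by linarith
  set P := B * ((nNodes m A ε : ℝ) - 1) ^ m / ε with hPdef
  have hn1 := nNodes_one_le hA hε0 hε1 hm3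
  have hge : (0:ℝ) ≤ (nNodes m A ε : ℝ) - 1 := by
    have : (1:ℝ) ≤ (nNodes m A ε : ℝ) := by exact_mod_cast hn1
    linarith
  have hP0 : 0 ≤ P := by positivity
  have he4 : 1 ≤ ε ^ (-(4:ℝ)/(4-(m:ℝ))) :=
    Real.one_le_rpow_of_pos_of_le_one_of_nonpos hε0 hε1
      (div_nonpos_of_nonpos_of_nonneg (by norm_num) (by linarith))
  have hL : ((nLevels m α A B ε : ℝ)) ≤ max 0 ((1/α) * Real.log P) + 1 := ceil_le_max _
  have h1 : α * (nLevels m α A B ε) ≤ max 0 (Real.log P) + α := by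
    have : α * max 0 ((1/α) * Real.log P) = max 0 (Real.log P) := by
      rw [mul_max_of_nonneg _ _ hα.le, mul_zero,
        show α * (1/α * Real.log P) = Real.log P by field_simp]
    nlinarith [le_max_left (0:ℝ) ((1/α) * Real.log P), hL]
  have h2 : Real.exp (max 0 (Real.log P)) ≤ max 1 (B * A ^ m) * ε ^ (-(4:ℝ)/(4-(m:ℝ))) := by
    have hPle : P ≤ B * A ^ m * ε ^ (-(4:ℝ)/(4-(m:ℝ))) := P_le hA hB hε0 hε1 hm3
    have hrhs1 : (1:ℝ) ≤ max 1 (B * A ^ m) * ε ^ (-(4:ℝ)/(4-(m:ℝ))) := by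
      have := le_max_left (1:ℝ) (B * A ^ m)
      nlinarith
    rcases eq_or_lt_of_le hP0 with h | h
    · rw [← h, Real.log_zero, max_self, Real.exp_zero]; exact hrhs1
    · rw [Real.exp_monotone.map_max, Real.exp_zero, Real.exp_log h]
      refine max_le hrhs1 (hPle.trans ?_)
      have h1 := le_max_right (1:ℝ) (B * A ^ m)
      have h2 : (0:ℝ) ≤ B * A ^ m := by positivity
      nlinarith
  calc Real.exp (α * (nLevels m α A B ε)) ≤ Real.exp (max 0 (Real.log P) + α) :=
        Real.exp_le_exp.mpr h1
    _ = Real.exp (max 0 (Real.log P)) * Real.exp α := Real.exp_add _ _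
    _ ≤ (max 1 (B * A ^ m) * ε ^ (-(4:ℝ)/(4-(m:ℝ)))) * Real.exp α := by
        apply mul_le_mul_of_nonneg_right h2 (Real.exp_nonneg _)
    _ = Real.exp α * max 1 (B * A ^ m) * ε ^ (-(4:ℝ)/(4-(m:ℝ))) := by ring
end helpers
section helpers2
variable {m : ℕ} {α β γ cβ cγ A B D ε : ℝ}

lemma L1_le (hα : 0 < α) (hA : 0 < A) (hB : 0 < B) (hε0 : 0 < ε) (hε1 : ε ≤ 1)
    (hln : 1 ≤ Real.log ε⁻¹) (hm3 : (m:ℝ) ≤ 2) :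
    (nLevels m α A B ε : ℝ) + 1 ≤
      ((1/α) * (max 0 (Real.log (max 1 (B * A ^ m))) + 4/(4-(m:ℝ))) + 2) * Real.log ε⁻¹ := by
  have hσ : (0:ℝ) < 4 - (m:ℝ) := by linarith
  set P := B * ((nNodes m A ε : ℝ) - 1) ^ m / ε with hPdef
  have hn1 := nNodes_one_le hA hε0 hε1 hm3
  have hge : (0:ℝ) ≤ (nNodes m A ε : ℝ) - 1 := by
    have : (1:ℝ) ≤ (nNodes m A ε : ℝ) := by exact_mod_cast hn1
    linarith
  have hP0 : 0 ≤ P := by positivity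
  have hmax0 : (0:ℝ) ≤ max 0 (Real.log (max 1 (B * A ^ m))) := le_max_left _ _
  have hlogP : Real.log P ≤ max 0 (Real.log (max 1 (B * A ^ m))) + (4/(4-(m:ℝ))) * Real.log ε⁻¹ := by
    rcases eq_or_lt_of_le hP0 with h | h
    · rw [← h, Real.log_zero]
      have : (0:ℝ) ≤ (4/(4-(m:ℝ))) * Real.log ε⁻¹ := by positivity
      linarith
    · have hPle : P ≤ B * A ^ m * ε ^ (-(4:ℝ)/(4-(m:ℝ))) := P_le hA hB hε0 hε1 hm3
      have hBA : (0:ℝ) < B * A ^ m := by positivity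
      have hPle2 : P ≤ max 1 (B * A ^ m) * ε ^ (-(4:ℝ)/(4-(m:ℝ))) := by
        have h1 := le_max_right (1:ℝ) (B * A ^ m)
        have he4 : 1 ≤ ε ^ (-(4:ℝ)/(4-(m:ℝ))) :=
          Real.one_le_rpow_of_pos_of_le_one_of_nonpos hε0 hε1
            (div_nonpos_of_nonpos_of_nonneg (by norm_num) (by linarith))
        nlinarith
      calc Real.log P ≤ Real.log (max 1 (B * A ^ m) * ε ^ (-(4:ℝ)/(4-(m:ℝ)))) :=
            Real.log_le_log h hPle2
        _ = Real.log (max 1 (B * A ^ m)) + (-(4:ℝ)/(4-(m:ℝ))) * Real.log ε := by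
            rw [Real.log_mul (by positivity) (by positivity), Real.log_rpow hε0]
        _ = Real.log (max 1 (B * A ^ m)) + (4/(4-(m:ℝ))) * Real.log ε⁻¹ := by
            rw [Real.log_inv]; ring
        _ ≤ max 0 (Real.log (max 1 (B * A ^ m))) + (4/(4-(m:ℝ))) * Real.log ε⁻¹ := by
            have := le_max_right (0:ℝ) (Real.log (max 1 (B * A ^ m)))
            linarith
  have hL : ((nLevels m α A B ε : ℝ)) ≤ max 0 ((1/α) * Real.log P) + 1 := ceil_le_max _
  have hmx : max 0 ((1/α) * Real.log P) ≤
      (1/α) * (max 0 (Real.log (max 1 (B * A ^ m))) + (4/(4-(m:ℝ))) * Real.log ε⁻¹) := by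
    apply max_le
    · positivity
    · apply mul_le_mul_of_nonneg_left hlogP (by positivity)
  have h4σ : (0:ℝ) < 4/(4-(m:ℝ)) := by positivity
  have hainv : (0:ℝ) < 1/α := by positivity
  nlinarith [mul_le_mul_of_nonneg_left hln hmax0, mul_le_mul_of_nonneg_left hln hainv.le,
    mul_nonneg hainv.le hmax0]

lemma cConst_le_log (hA : 0 < A) (hε0 : 0 < ε) (hε1 : ε ≤ 1)
    (hln : 1 ≤ Real.log ε⁻¹) (hm3 : (m:ℝ) ≤ 2) :
    cConst (nNodes m A ε) ≤
      (2 * Real.pi * (Real.log (A+2) + 1/(4-(m:ℝ)) +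
        Real.sqrt (8/Real.pi) * (Real.log 2) ^ (-(1:ℝ)/2))) * Real.log ε⁻¹ := by
  have hσ : (0:ℝ) < 4 - (m:ℝ) := by linarith
  have hpi := Real.pi_pos
  have h1 := e1_one_le (m := m) hε0 hε1 hm3
  have hn := nNodes_le hA hε0 hε1 hm3
  have hlog : Real.log ((nNodes m A ε : ℝ) + 1) ≤ Real.log (A+2) + (1/(4-(m:ℝ))) * Real.log ε⁻¹ := by
    calc Real.log ((nNodes m A ε : ℝ) + 1)
        ≤ Real.log ((A+2) * ε ^ (-(1:ℝ)/(4-(m:ℝ)))) := by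
          apply Real.log_le_log (by positivity)
          nlinarith
      _ = Real.log (A+2) + (-(1:ℝ)/(4-(m:ℝ))) * Real.log ε := by
          rw [Real.log_mul (by positivity) (by positivity), Real.log_rpow hε0]
      _ = Real.log (A+2) + (1/(4-(m:ℝ))) * Real.log ε⁻¹ := by rw [Real.log_inv]; ring
  have hK0 : (0:ℝ) ≤ Real.sqrt (8/Real.pi) * (Real.log 2) ^ (-(1:ℝ)/2) := by
    have hl2 : (0:ℝ) < Real.log 2 := Real.log_pos (by norm_num)
    positivity
  have hlA : (0:ℝ) ≤ Real.log (A+2) := Real.log_nonneg (by linarith)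
  calc cConst (nNodes m A ε) ≤ 2 * Real.pi * (Real.log ((nNodes m A ε : ℝ)+1) +
        Real.sqrt (8/Real.pi) * (Real.log 2) ^ (-(1:ℝ)/2)) := by
        exact cConst_le (nNodes m A ε)
    _ ≤ (2 * Real.pi * (Real.log (A+2) + 1/(4-(m:ℝ)) +
        Real.sqrt (8/Real.pi) * (Real.log 2) ^ (-(1:ℝ)/2))) * Real.log ε⁻¹ := by
        have hσ1 : (0:ℝ) < 1/(4-(m:ℝ)) := by positivity
        nlinarith [mul_le_mul_of_nonneg_left hln hK0, mul_le_mul_of_nonneg_left hln hlA,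
          mul_le_mul_of_nonneg_left hln hσ1.le]

lemma sqrt_term (hcβ : 0 < cβ) (hcγ : 0 < cγ) (k : ℕ) :
    Real.sqrt (cβ * Real.exp (-β*k) * (cγ * Real.exp (γ*k))) =
      Real.sqrt (cβ*cγ) * (Real.exp ((γ-β)/2))^k := by
  rw [mul_mul_mul_comm, ← Real.exp_add, show -β*(k:ℝ) + γ*(k:ℝ) = (γ-β)*k by ring,
    Real.sqrt_mul (by positivity), sqrt_exp',
    show (γ-β)*(k:ℝ)/2 = (k:ℝ)*((γ-β)/2) by ring, Real.exp_nat_mul]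

lemma sqrt_div_term (hcβ : 0 < cβ) (hcγ : 0 < cγ) (l : ℕ) :
    Real.sqrt (cβ * Real.exp (-β*l) / (cγ * Real.exp (γ*l))) * (cγ * Real.exp (γ*l)) =
      Real.sqrt (cβ*cγ) * (Real.exp ((γ-β)/2))^l := by
  have hb : (0:ℝ) < cγ * Real.exp (γ*l) := by positivity
  have key : cβ * Real.exp (-β*l) / (cγ*Real.exp (γ*l)) * (cγ*Real.exp (γ*l))^2
      = cβ * Real.exp (-β*l) * (cγ*Real.exp (γ*l)) := by
    field_simp
  calc Real.sqrt (cβ * Real.exp (-β*l) / (cγ * Real.exp (γ*l))) * (cγ * Real.exp (γ*l))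
      = Real.sqrt (cβ * Real.exp (-β*l) / (cγ * Real.exp (γ*l))) *
          Real.sqrt ((cγ * Real.exp (γ*l))^2) := by rw [Real.sqrt_sq hb.le]
    _ = Real.sqrt (cβ * Real.exp (-β*l) / (cγ * Real.exp (γ*l)) * (cγ * Real.exp (γ*l))^2) :=
        (Real.sqrt_mul (by positivity) _).symm
    _ = Real.sqrt (cβ * Real.exp (-β*l) * (cγ * Real.exp (γ*l))) := by rw [key]
    _ = Real.sqrt (cβ*cγ) * (Real.exp ((γ-β)/2))^l := sqrt_term hcβ hcγ l
end helpers2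
section core
variable {m : ℕ} {α β γ cβ cγ A B D ε : ℝ}

lemma cost_core (hα : 0 < α) (hcβ : 0 < cβ) (hcγ : 0 < cγ) (hA : 0 < A) (hB : 0 < B)
    (hD : 0 < D) (hε0 : 0 < ε) (hε1 : ε ≤ 1) (hm3 : (m:ℝ) ≤ 2) :
    ∑ l ∈ Finset.range (nLevels m α A B ε + 1),
        (nSamples m α β γ cβ cγ A B D ε l : ℝ) * (cγ * Real.exp (γ * l))
      ≤ (D * cConst (nNodes m A ε) * ((nNodes m A ε : ℝ) - 1) ^ (2*m) / ε ^ 2) * (cβ*cγ) *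
          (∑ l ∈ Finset.range (nLevels m α A B ε + 1), (Real.exp ((γ-β)/2))^l) ^ 2
        + cγ * ∑ l ∈ Finset.range (nLevels m α A B ε + 1), (Real.exp γ)^l := by
  set n := nNodes m A ε with hn
  set L := nLevels m α A B ε with hLdef
  set K := D * cConst n * ((n : ℝ) - 1) ^ (2*m) / ε ^ 2 with hK
  set x := Real.exp ((γ-β)/2) with hx
  set S := ∑ k ∈ Finset.range (L + 1),
    Real.sqrt (cβ * Real.exp (-β * k) * (cγ * Real.exp (γ * k))) with hSdef
  set G := ∑ l ∈ Finset.range (L + 1), x ^ l with hGdef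
  have hn1 : 1 ≤ n := nNodes_one_le hA hε0 hε1 hm3
  have hge : (0:ℝ) ≤ (n : ℝ) - 1 := by
    have : (1:ℝ) ≤ (n : ℝ) := by exact_mod_cast hn1
    linarith
  have hK0 : 0 ≤ K := by
    have h1 := cConst_nonneg n
    have h2 : (0:ℝ) ≤ ((n : ℝ) - 1) ^ (2*m) := by positivity
    apply div_nonneg _ (by positivity)
    positivity
  have hS : S = Real.sqrt (cβ*cγ) * G := by
    rw [hSdef, hGdef, Finset.mul_sum]
    exact Finset.sum_congr rfl fun k _ => sqrt_term hcβ hcγ k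
  have hS0 : 0 ≤ S := Finset.sum_nonneg fun k _ => Real.sqrt_nonneg _
  have hterm : ∀ l ∈ Finset.range (L + 1),
      (nSamples m α β γ cβ cγ A B D ε l : ℝ) * (cγ * Real.exp (γ * l))
        ≤ K * (Real.sqrt (cβ*cγ) * x ^ l) * S + cγ * (Real.exp γ) ^ l := by
    intro l _
    have hXnn : 0 ≤ K * Real.sqrt (cβ * Real.exp (-β * l) / (cγ * Real.exp (γ * l))) * S := by
      have := Real.sqrt_nonneg (cβ * Real.exp (-β * l) / (cγ * Real.exp (γ * l)))
      positivity
    have hceil : (nSamples m α β γ cβ cγ A B D ε l : ℝ) ≤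
        K * Real.sqrt (cβ * Real.exp (-β * l) / (cγ * Real.exp (γ * l))) * S + 1 := by
      simp only [nSamples, ← hn, ← hLdef, ← hK, ← hSdef]
      exact (Nat.ceil_lt_add_one hXnn).le
    calc (nSamples m α β γ cβ cγ A B D ε l : ℝ) * (cγ * Real.exp (γ * l))
        ≤ (K * Real.sqrt (cβ * Real.exp (-β * l) / (cγ * Real.exp (γ * l))) * S + 1) *
            (cγ * Real.exp (γ * l)) := by
          apply mul_le_mul_of_nonneg_right hceil (by positivity)
      _ = K * (Real.sqrt (cβ * Real.exp (-β * l) / (cγ * Real.exp (γ * l))) *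
            (cγ * Real.exp (γ * l))) * S + cγ * Real.exp (γ * l) := by ring
      _ = K * (Real.sqrt (cβ*cγ) * x ^ l) * S + cγ * (Real.exp γ) ^ l := by
          rw [sqrt_div_term hcβ hcγ l, show γ * (l:ℝ) = (l:ℝ) * γ by ring, Real.exp_nat_mul]
  calc ∑ l ∈ Finset.range (L + 1),
      (nSamples m α β γ cβ cγ A B D ε l : ℝ) * (cγ * Real.exp (γ * l))
      ≤ ∑ l ∈ Finset.range (L + 1), (K * (Real.sqrt (cβ*cγ) * x ^ l) * S + cγ * (Real.exp γ) ^ l) :=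
        Finset.sum_le_sum hterm
    _ = K * Real.sqrt (cβ*cγ) * S * G + cγ * ∑ l ∈ Finset.range (L + 1), (Real.exp γ) ^ l := by
        rw [Finset.sum_add_distrib]
        congr 1
        · calc ∑ l ∈ Finset.range (L + 1), K * (Real.sqrt (cβ*cγ) * x ^ l) * S
              = ∑ l ∈ Finset.range (L + 1), (K * Real.sqrt (cβ*cγ) * S) * x ^ l :=
                Finset.sum_congr rfl fun l _ => by ring
            _ = K * Real.sqrt (cβ*cγ) * S * G := by rw [hGdef, ← Finset.mul_sum]
        · rw [← Finset.mul_sum]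
    _ = K * (cβ*cγ) * G ^ 2 + cγ * ∑ l ∈ Finset.range (L + 1), (Real.exp γ) ^ l := by
        rw [hS]
        have h2 : Real.sqrt (cβ*cγ) * Real.sqrt (cβ*cγ) = cβ*cγ :=
          Real.mul_self_sqrt (by positivity)
        linear_combination K * G^2 * h2
end core
section final_helpers
variable {m : ℕ} {α β γ cβ cγ A B D ε r : ℝ}

lemma expL_pow (hα : 0 < α) (hr : 0 ≤ r) (hA : 0 < A) (hB : 0 < B) (hε0 : 0 < ε)
    (hε1 : ε ≤ 1) (hm3 : (m:ℝ) ≤ 2) :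
    Real.exp (r * (nLevels m α A B ε)) ≤
      (Real.exp α * max 1 (B * A ^ m)) ^ (r/α) * ε ^ ((-(4:ℝ)/(4-(m:ℝ))) * (r/α)) := by
  have hM : (0:ℝ) < Real.exp α * max 1 (B * A ^ m) :=
    mul_pos (Real.exp_pos _) (zero_lt_one.trans_le (le_max_left _ _))
  have h := expL_le hα hA hB hε0 hε1 hm3
  calc Real.exp (r * (nLevels m α A B ε))
      = (Real.exp (α * (nLevels m α A B ε))) ^ (r/α) := by
        rw [← Real.exp_mul, show α * (nLevels m α A B ε : ℝ) * (r/α) = r * (nLevels m α A B ε : ℝ) by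
          field_simp]
    _ ≤ (Real.exp α * max 1 (B * A ^ m) * ε ^ (-(4:ℝ)/(4-(m:ℝ)))) ^ (r/α) :=
        Real.rpow_le_rpow (Real.exp_nonneg _) h (by positivity)
    _ = (Real.exp α * max 1 (B * A ^ m)) ^ (r/α) * ε ^ ((-(4:ℝ)/(4-(m:ℝ))) * (r/α)) := by
        rw [Real.mul_rpow hM.le (Real.rpow_nonneg hε0.le _), ← Real.rpow_mul hε0.le]

lemma K_le (hA : 0 < A) (hD : 0 < D) (hε0 : 0 < ε) (hε1 : ε ≤ 1)
    (hln : 1 ≤ Real.log ε⁻¹) (hm3 : (m:ℝ) ≤ 2) :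
    D * cConst (nNodes m A ε) * ((nNodes m A ε : ℝ) - 1) ^ (2*m) / ε ^ 2 ≤
      (D * (2 * Real.pi * (Real.log (A+2) + 1/(4-(m:ℝ)) +
          Real.sqrt (8/Real.pi) * (Real.log 2) ^ (-(1:ℝ)/2))) * A ^ (2*m)) *
        Real.log ε⁻¹ * ε ^ (-(8:ℝ)/(4-(m:ℝ))) := by
  have hσ : (0:ℝ) < 4 - (m:ℝ) := by linarith
  set n := nNodes m A ε with hn
  set Cc := 2 * Real.pi * (Real.log (A+2) + 1/(4-(m:ℝ)) +
    Real.sqrt (8/Real.pi) * (Real.log 2) ^ (-(1:ℝ)/2)) with hCc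
  have hCc0 : 0 < Cc := by
    have hpi := Real.pi_pos
    have hl2 : (0:ℝ) < Real.log 2 := Real.log_pos (by norm_num)
    have hlA : (0:ℝ) ≤ Real.log (A+2) := Real.log_nonneg (by linarith)
    have hK0 : (0:ℝ) ≤ Real.sqrt (8/Real.pi) * (Real.log 2) ^ (-(1:ℝ)/2) := by positivity
    have : (0:ℝ) < 1/(4-(m:ℝ)) := by positivity
    nlinarith
  have hc := cConst_le_log hA hε0 hε1 hln hm3
  have hn1 := nNodes_one_le hA hε0 hε1 hm3
  have hge : (0:ℝ) ≤ (n : ℝ) - 1 := by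
    have : (1:ℝ) ≤ (n : ℝ) := by exact_mod_cast hn1
    linarith
  have hpm := nNodes_pow_le hA hε0 hε1 hm3
  have hp : ((n:ℝ)-1) ^ (2*m) ≤ A ^ (2*m) * ε ^ (-(2*(m:ℝ))/(4-(m:ℝ))) := by
    have h2 : ((n:ℝ)-1) ^ (2*m) = (((n:ℝ)-1) ^ m) ^ 2 := by
      rw [← pow_mul, mul_comm]
    have h3 : (A ^ m * ε ^ (-(m:ℝ)/(4-(m:ℝ)))) ^ 2 = A ^ (2*m) * ε ^ (-(2*(m:ℝ))/(4-(m:ℝ))) := by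
      rw [mul_pow, ← pow_mul, mul_comm m 2, ← Real.rpow_natCast (ε ^ (-(m:ℝ)/(4-(m:ℝ)))) 2,
        ← Real.rpow_mul hε0.le,
        show (-(m:ℝ)/(4-(m:ℝ))) * ((2:ℕ):ℝ) = -(2*(m:ℝ))/(4-(m:ℝ)) by push_cast; ring]
    rw [h2, ← h3]
    exact pow_le_pow_left₀ (by positivity) hpm 2
  have he2 : ε ^ (-(2*(m:ℝ))/(4-(m:ℝ))) / ε ^ (2:ℕ) = ε ^ (-(8:ℝ)/(4-(m:ℝ))) := by
    rw [← Real.rpow_natCast ε 2, div_eq_mul_inv, ← Real.rpow_neg hε0.le, ← Real.rpow_add hε0]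
    congr 1
    push_cast
    field_simp
    ring
  have hpnn : (0:ℝ) ≤ ((n:ℝ)-1) ^ (2*m) := by positivity
  have hnum : D * cConst n * ((n:ℝ)-1) ^ (2*m) ≤
      D * (Cc * Real.log ε⁻¹) * (A ^ (2*m) * ε ^ (-(2*(m:ℝ))/(4-(m:ℝ)))) := by
    have hcn := cConst_nonneg n
    apply mul_le_mul _ hp hpnn (by positivity)
    exact mul_le_mul le_rfl hc hcn hD.le
  calc D * cConst n * ((n:ℝ)-1) ^ (2*m) / ε ^ 2
      ≤ D * (Cc * Real.log ε⁻¹) * (A ^ (2*m) * ε ^ (-(2*(m:ℝ))/(4-(m:ℝ)))) / ε ^ 2 := by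
        gcongr
    _ = (D * Cc * A ^ (2*m)) * Real.log ε⁻¹ * (ε ^ (-(2*(m:ℝ))/(4-(m:ℝ))) / ε ^ (2:ℕ)) := by
        ring
    _ = (D * Cc * A ^ (2*m)) * Real.log ε⁻¹ * ε ^ (-(8:ℝ)/(4-(m:ℝ))) := by rw [he2]

lemma sumexp_le (hα : 0 < α) (hγ : 0 < γ) (hcγ : 0 < cγ) (hA : 0 < A) (hB : 0 < B)
    (hε0 : 0 < ε) (hε1 : ε ≤ 1) (hm3 : (m:ℝ) ≤ 2) :
    cγ * ∑ l ∈ Finset.range (nLevels m α A B ε + 1), (Real.exp γ)^l ≤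
      (cγ * Real.exp γ / (Real.exp γ - 1) * (Real.exp α * max 1 (B * A ^ m)) ^ (γ/α)) *
        ε ^ ((-(4:ℝ)/(4-(m:ℝ))) * (γ/α)) := by
  have h1 : 1 < Real.exp γ := by
    rw [show (1:ℝ) = Real.exp 0 by rw [Real.exp_zero]]
    exact Real.exp_lt_exp.mpr hγ
  set L := nLevels m α A B ε with hL
  have hg := geom_gt_one (Real.exp γ) h1 (L+1)
  have hpow : (Real.exp γ)^(L+1) = Real.exp γ * Real.exp (γ * L) := by
    rw [pow_succ, show γ * (L:ℝ) = (L:ℝ) * γ by ring, Real.exp_nat_mul]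
    ring
  have hexpL := expL_pow (r := γ) hα hγ.le hA hB hε0 hε1 hm3
  have hcoef : (0:ℝ) ≤ cγ * Real.exp γ / (Real.exp γ - 1) := by
    apply div_nonneg (by positivity)
    linarith
  calc cγ * ∑ l ∈ Finset.range (L + 1), (Real.exp γ)^l
      ≤ cγ * ((Real.exp γ)^(L+1) / (Real.exp γ - 1)) :=
        mul_le_mul_of_nonneg_left hg hcγ.le
    _ = (cγ * Real.exp γ / (Real.exp γ - 1)) * Real.exp (γ * L) := by
        rw [hpow]; ring
    _ ≤ (cγ * Real.exp γ / (Real.exp γ - 1)) *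
          ((Real.exp α * max 1 (B * A ^ m)) ^ (γ/α) * ε ^ ((-(4:ℝ)/(4-(m:ℝ))) * (γ/α))) :=
        mul_le_mul_of_nonneg_left hexpL hcoef
    _ = (cγ * Real.exp γ / (Real.exp γ - 1) * (Real.exp α * max 1 (B * A ^ m)) ^ (γ/α)) *
          ε ^ ((-(4:ℝ)/(4-(m:ℝ))) * (γ/α)) := by ring
end final_helpers

set_option maxHeartbeats 1000000 in
/-- Cost-complexity bound for the optimally tuned MLMC estimator of a parametric
expectation interpolated by cubic splines. -/
theorem stmt0 (m : ℕ) (hm : m ∈ ({0, 1, 2} : Set ℕ))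
    (α β γ cβ cγ A B D : ℝ)
    (hα : 0 < α) (hβ : 0 < β) (hγ : 0 < γ) (h2α : 2 * α ≥ min β γ)
    (hcβ : 0 < cβ) (hcγ : 0 < cγ) (hA : 0 < A) (hB : 0 < B) (hD : 0 < D) :
    ∃ C > 0, ∀ ε ∈ Set.Ioo (0 : ℝ) (Real.exp (-1)),
      ∑ l ∈ Finset.range (nLevels m α A B ε + 1),
          (nSamples m α β γ cβ cγ A B D ε l : ℝ) * (cγ * Real.exp (γ * l))
        ≤ C * Real.log ε⁻¹ * ε ^ (-2 - 2 * (m : ℝ) / (4 - (m : ℝ))) *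
          (if β > γ then 1
           else if β = γ then (Real.log ε⁻¹) ^ 2
           else ε ^ (4 * (β - γ) / (α * (4 - (m : ℝ))))) := by
  have hm3 : (m:ℝ) ≤ 2 := by
    simp only [Set.mem_insert_iff, Set.mem_singleton_iff] at hm
    rcases hm with h | h | h <;> subst h <;> norm_num
  have hσ : (0:ℝ) < 4 - (m:ℝ) := by linarith
  have hαne : α ≠ 0 := ne_of_gt hα
  have hσne : (4:ℝ)-(m:ℝ) ≠ 0 := ne_of_gt hσ
  have hpi := Real.pi_pos
  have hl2 : (0:ℝ) < Real.log 2 := Real.log_pos (by norm_num)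
  set Cc : ℝ := 2 * Real.pi * (Real.log (A+2) + 1/(4-(m:ℝ)) +
    Real.sqrt (8/Real.pi) * (Real.log 2) ^ (-(1:ℝ)/2)) with hCcdef
  have hCc0 : 0 < Cc := by
    have hlA : (0:ℝ) ≤ Real.log (A+2) := Real.log_nonneg (by linarith)
    have hK0 : (0:ℝ) ≤ Real.sqrt (8/Real.pi) * (Real.log 2) ^ (-(1:ℝ)/2) := by positivity
    have h5 : (0:ℝ) < 1/(4-(m:ℝ)) := by positivity
    rw [hCcdef]
    nlinarith
  set C1 : ℝ := (D * Cc * A ^ (2*m)) * (cβ * cγ) with hC1def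
  have hC10 : 0 < C1 := by positivity
  set M : ℝ := Real.exp α * max 1 (B * A ^ m) with hMdef
  have hM0 : (0:ℝ) < M :=
    mul_pos (Real.exp_pos _) (zero_lt_one.trans_le (le_max_left _ _))
  have hexpγ1 : 1 < Real.exp γ := by
    rw [show (1:ℝ) = Real.exp 0 by rw [Real.exp_zero]]
    exact Real.exp_lt_exp.mpr hγ
  set C2 : ℝ := cγ * Real.exp γ / (Real.exp γ - 1) * M ^ (γ/α) with hC2def
  have hC20 : 0 < C2 :=
    mul_pos (div_pos (by positivity) (by linarith)) (Real.rpow_pos_of_pos hM0 _)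
  set CL : ℝ := (1/α) * (max 0 (Real.log (max 1 (B * A ^ m))) + 4/(4-(m:ℝ))) + 2 with hCLdef
  have hCL0 : 0 < CL := by
    have h1 : (0:ℝ) ≤ (1/α) * (max 0 (Real.log (max 1 (B * A ^ m))) + 4/(4-(m:ℝ))) :=
      mul_nonneg (by positivity) (add_nonneg (le_max_left _ _) (by positivity))
    rw [hCLdef]
    linarith
  have hrw : (-2 - 2*(m:ℝ)/(4-(m:ℝ))) = -(8:ℝ)/(4-(m:ℝ)) := by
    field_simp
    ring
  rcases lt_trichotomy β γ with hlt | heqc | hgt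
  · -- β < γ
    set δ : ℝ := (γ - β)/2 with hδdef
    have hδ0 : 0 < δ := by rw [hδdef]; linarith
    set x : ℝ := Real.exp δ with hxdef
    have hx1 : 1 < x := by
      rw [hxdef, show (1:ℝ) = Real.exp 0 by rw [Real.exp_zero]]
      exact Real.exp_lt_exp.mpr hδ0
    set cX : ℝ := x/(x-1) * M ^ (δ/α) with hcXdef
    have hcX0 : 0 < cX :=
      mul_pos (div_pos (by linarith) (by linarith)) (Real.rpow_pos_of_pos hM0 _)
    refine ⟨C1 * cX^2 + C2, add_pos (mul_pos hC10 (by positivity)) hC20, ?_⟩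
    rintro ε ⟨hε0, hεlt⟩
    have hε1 : ε ≤ 1 := by
      have : Real.exp (-1) < 1 := by
        rw [show (1:ℝ) = Real.exp 0 by rw [Real.exp_zero]]
        exact Real.exp_lt_exp.mpr (by norm_num)
      linarith
    have hln : 1 ≤ Real.log ε⁻¹ := by
      have h := Real.log_lt_log hε0 hεlt
      rw [Real.log_exp] at h
      rw [Real.log_inv]
      linarith
    rw [if_neg (by linarith : ¬ β > γ), if_neg hlt.ne, hrw]
    -- exponent comparison for the second term
    have hmin : min β γ = β := min_eq_left hlt.le
    have hβ2α : β ≤ 2*α := by rw [hmin] at h2α; linarith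
    have hexp2 : ε ^ ((-(4:ℝ)/(4-(m:ℝ))) * (γ/α)) ≤
        ε ^ (-(8:ℝ)/(4-(m:ℝ)) + 4*(β-γ)/(α*(4-(m:ℝ)))) := by
      apply Real.rpow_le_rpow_of_exponent_ge hε0 hε1
      rw [show (-(4:ℝ)/(4-(m:ℝ))) * (γ/α) = (-4*γ)/((4-(m:ℝ))*α) from div_mul_div_comm _ _ _ _,
        show -(8:ℝ)/(4-(m:ℝ)) + 4*(β-γ)/(α*(4-(m:ℝ))) = (-8*α + 4*(β-γ))/((4-(m:ℝ))*α) by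
          field_simp,
        div_le_div_iff₀ (by positivity) (by positivity)]
      apply mul_le_mul_of_nonneg_right _ (by positivity)
      linarith
    have hr8 : (0:ℝ) < ε ^ (-(8:ℝ)/(4-(m:ℝ))) := Real.rpow_pos_of_pos hε0 _
    have hrE : (0:ℝ) < ε ^ (4*(β-γ)/(α*(4-(m:ℝ)))) := Real.rpow_pos_of_pos hε0 _
    have hsplit : ε ^ (-(8:ℝ)/(4-(m:ℝ)) + 4*(β-γ)/(α*(4-(m:ℝ)))) =
        ε ^ (-(8:ℝ)/(4-(m:ℝ))) * ε ^ (4*(β-γ)/(α*(4-(m:ℝ)))) := Real.rpow_add hε0 _ _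
    -- main ingredients
    have hcore := cost_core (m := m) (α := α) (β := β) (γ := γ) (cβ := cβ) (cγ := cγ)
      (A := A) (B := B) (D := D) (ε := ε) hα hcβ hcγ hA hB hD hε0 hε1 hm3
    have hKb := K_le (m := m) (A := A) (D := D) (ε := ε) hA hD hε0 hε1 hln hm3
    rw [← hCcdef] at hKb
    have hsum := sumexp_le (m := m) (α := α) (γ := γ) (cγ := cγ) (A := A) (B := B) (ε := ε)
      hα hγ hcγ hA hB hε0 hε1 hm3
    rw [← hMdef, ← hC2def] at hsum
    have hexpδL := expL_pow (m := m) (α := α) (A := A) (B := B) (ε := ε) (r := δ)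
      hα hδ0.le hA hB hε0 hε1 hm3
    rw [← hMdef] at hexpδL
    set t : ℝ := (-(4:ℝ)/(4-(m:ℝ))) * (δ/α) with htdef
    set n := nNodes m A ε with hndef
    set L := nLevels m α A B ε with hLdef
    set G := ∑ l ∈ Finset.range (L + 1), (Real.exp ((γ-β)/2))^l with hGdef
    have hG0 : 0 ≤ G := Finset.sum_nonneg fun l _ => by positivity
    have hK0 : 0 ≤ D * cConst n * ((n:ℝ) - 1) ^ (2*m) / ε ^ 2 := by
      have h1 := cConst_nonneg n
      have h2 : (0:ℝ) ≤ ((n:ℝ)-1) ^ (2*m) := by rw [pow_mul]; positivity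
      apply div_nonneg _ (by positivity)
      positivity
    have hGle : G ≤ cX * ε ^ t := by
      have hg := geom_gt_one x hx1 (L+1)
      have hpow : x^(L+1) = x * Real.exp (δ * L) := by
        rw [pow_succ, show δ * (L:ℝ) = (L:ℝ) * δ by ring, hxdef, Real.exp_nat_mul]
        ring
      have hGx : G = ∑ l ∈ Finset.range (L+1), x ^ l := by
        rw [hGdef, hxdef, hδdef]
      calc G ≤ x^(L+1)/(x-1) := by rw [hGx]; exact hg
        _ = (x/(x-1)) * Real.exp (δ * L) := by rw [hpow]; ring
        _ ≤ (x/(x-1)) * (M ^ (δ/α) * ε ^ t) := by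
            apply mul_le_mul_of_nonneg_left hexpδL
            apply div_nonneg (by linarith) (by linarith)
        _ = cX * ε ^ t := by rw [hcXdef]; ring
    have hG2 : G^2 ≤ cX^2 * ε ^ (t+t) := by
      have h := pow_le_pow_left₀ hG0 hGle 2
      rw [mul_pow, sq (ε ^ t), ← Real.rpow_add hε0] at h
      exact h
    have hEeq : t + t = 4*(β-γ)/(α*(4-(m:ℝ))) := by
      rw [htdef, hδdef]
      field_simp
      ring
    have hterm1 : (D * cConst n * ((n:ℝ) - 1) ^ (2*m) / ε ^ 2) * (cβ*cγ) * G^2 ≤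
        ((D * Cc * A ^ (2*m)) * Real.log ε⁻¹ * ε ^ (-(8:ℝ)/(4-(m:ℝ)))) * (cβ*cγ) *
          (cX^2 * ε ^ (t+t)) := by
      have s1 : (D * cConst n * ((n:ℝ) - 1) ^ (2*m) / ε ^ 2) * (cβ*cγ) * G^2 ≤
          (D * cConst n * ((n:ℝ) - 1) ^ (2*m) / ε ^ 2) * (cβ*cγ) * (cX^2 * ε ^ (t+t)) :=
        mul_le_mul_of_nonneg_left hG2 (by positivity)
      have s2 : (D * cConst n * ((n:ℝ) - 1) ^ (2*m) / ε ^ 2) * (cβ*cγ) * (cX^2 * ε ^ (t+t)) ≤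
          ((D * Cc * A ^ (2*m)) * Real.log ε⁻¹ * ε ^ (-(8:ℝ)/(4-(m:ℝ)))) * (cβ*cγ) *
            (cX^2 * ε ^ (t+t)) := by
        apply mul_le_mul_of_nonneg_right (mul_le_mul_of_nonneg_right hKb (by positivity))
        positivity
      exact s1.trans s2
    have hterm2 : cγ * ∑ l ∈ Finset.range (L+1), (Real.exp γ)^l ≤
        C2 * (Real.log ε⁻¹ * (ε ^ (-(8:ℝ)/(4-(m:ℝ))) * ε ^ (4*(β-γ)/(α*(4-(m:ℝ)))))) := by
      calc cγ * ∑ l ∈ Finset.range (L+1), (Real.exp γ)^l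
          ≤ C2 * ε ^ ((-(4:ℝ)/(4-(m:ℝ))) * (γ/α)) := hsum
        _ ≤ C2 * (ε ^ (-(8:ℝ)/(4-(m:ℝ))) * ε ^ (4*(β-γ)/(α*(4-(m:ℝ))))) := by
            rw [← hsplit]
            exact mul_le_mul_of_nonneg_left hexp2 hC20.le
        _ ≤ C2 * (Real.log ε⁻¹ * (ε ^ (-(8:ℝ)/(4-(m:ℝ))) * ε ^ (4*(β-γ)/(α*(4-(m:ℝ)))))) := by
            have hXY : (0:ℝ) ≤ ε ^ (-(8:ℝ)/(4-(m:ℝ))) * ε ^ (4*(β-γ)/(α*(4-(m:ℝ)))) := by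
              positivity
            exact mul_le_mul_of_nonneg_left (le_mul_of_one_le_left hXY hln) hC20.le
    calc ∑ l ∈ Finset.range (L + 1), (nSamples m α β γ cβ cγ A B D ε l : ℝ) * (cγ * Real.exp (γ * l))
        ≤ (D * cConst n * ((n:ℝ) - 1) ^ (2*m) / ε ^ 2) * (cβ*cγ) * G^2
            + cγ * ∑ l ∈ Finset.range (L + 1), (Real.exp γ)^l := hcore
      _ ≤ ((D * Cc * A ^ (2*m)) * Real.log ε⁻¹ * ε ^ (-(8:ℝ)/(4-(m:ℝ)))) * (cβ*cγ) *
            (cX^2 * ε ^ (t+t))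
            + C2 * (Real.log ε⁻¹ * (ε ^ (-(8:ℝ)/(4-(m:ℝ))) * ε ^ (4*(β-γ)/(α*(4-(m:ℝ)))))) :=
          add_le_add hterm1 hterm2
      _ = (C1 * cX^2 + C2) * Real.log ε⁻¹ * ε ^ (-(8:ℝ)/(4-(m:ℝ))) *
            ε ^ (4*(β-γ)/(α*(4-(m:ℝ)))) := by
          rw [hEeq, hC1def]
          ring
  · -- β = γ
    subst heqc
    refine ⟨C1 * CL^2 + C2, add_pos (mul_pos hC10 (by positivity)) hC20, ?_⟩
    rintro ε ⟨hε0, hεlt⟩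
    have hε1 : ε ≤ 1 := by
      have : Real.exp (-1) < 1 := by
        rw [show (1:ℝ) = Real.exp 0 by rw [Real.exp_zero]]
        exact Real.exp_lt_exp.mpr (by norm_num)
      linarith
    have hln : 1 ≤ Real.log ε⁻¹ := by
      have h := Real.log_lt_log hε0 hεlt
      rw [Real.log_exp] at h
      rw [Real.log_inv]
      linarith
    rw [if_neg (lt_irrefl β), if_pos rfl, hrw]
    have hmin : min β β = β := min_self β
    have hβ2α : β ≤ 2*α := by rw [hmin] at h2α; linarith
    have hexp2 : ε ^ ((-(4:ℝ)/(4-(m:ℝ))) * (β/α)) ≤ ε ^ (-(8:ℝ)/(4-(m:ℝ))) := by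
      apply Real.rpow_le_rpow_of_exponent_ge hε0 hε1
      rw [show (-(4:ℝ)/(4-(m:ℝ))) * (β/α) = (-4*β)/((4-(m:ℝ))*α) from div_mul_div_comm _ _ _ _,
        show -(8:ℝ)/(4-(m:ℝ)) = (-8*α)/((4-(m:ℝ))*α) by
          rw [div_eq_div_iff hσne (by positivity)]; ring,
        div_le_div_iff₀ (by positivity) (by positivity)]
      apply mul_le_mul_of_nonneg_right _ (by positivity)
      linarith
    have hr8 : (0:ℝ) < ε ^ (-(8:ℝ)/(4-(m:ℝ))) := Real.rpow_pos_of_pos hε0 _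
    have hcore := cost_core (m := m) (α := α) (β := β) (γ := β) (cβ := cβ) (cγ := cγ)
      (A := A) (B := B) (D := D) (ε := ε) hα hcβ hcγ hA hB hD hε0 hε1 hm3
    have hKb := K_le (m := m) (A := A) (D := D) (ε := ε) hA hD hε0 hε1 hln hm3
    rw [← hCcdef] at hKb
    have hsum := sumexp_le (m := m) (α := α) (γ := β) (cγ := cγ) (A := A) (B := B) (ε := ε)
      hα hγ hcγ hA hB hε0 hε1 hm3
    rw [← hMdef, ← hC2def] at hsum
    have hLb := L1_le (m := m) (α := α) (A := A) (B := B) (ε := ε) hα hA hB hε0 hε1 hln hm3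
    rw [← hCLdef] at hLb
    set n := nNodes m A ε with hndef
    set L := nLevels m α A B ε with hLdef
    have hGeq : (∑ l ∈ Finset.range (L + 1), (Real.exp ((β-β)/2))^l) = (L:ℝ) + 1 := by
      simp
    have hG2 : (∑ l ∈ Finset.range (L + 1), (Real.exp ((β-β)/2))^l)^2 ≤
        CL^2 * (Real.log ε⁻¹)^2 := by
      rw [hGeq, ← mul_pow]
      exact pow_le_pow_left₀ (by positivity) hLb 2
    have hK0 : 0 ≤ D * cConst n * ((n:ℝ) - 1) ^ (2*m) / ε ^ 2 := by
      have h1 := cConst_nonneg n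
      have h2 : (0:ℝ) ≤ ((n:ℝ)-1) ^ (2*m) := by rw [pow_mul]; positivity
      apply div_nonneg _ (by positivity)
      positivity
    have hterm1 : (D * cConst n * ((n:ℝ) - 1) ^ (2*m) / ε ^ 2) * (cβ*cγ) *
        (∑ l ∈ Finset.range (L + 1), (Real.exp ((β-β)/2))^l)^2 ≤
        ((D * Cc * A ^ (2*m)) * Real.log ε⁻¹ * ε ^ (-(8:ℝ)/(4-(m:ℝ)))) * (cβ*cγ) *
          (CL^2 * (Real.log ε⁻¹)^2) := by
      have s1 := mul_le_mul_of_nonneg_left hG2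
        (show (0:ℝ) ≤ (D * cConst n * ((n:ℝ) - 1) ^ (2*m) / ε ^ 2) * (cβ*cγ) by positivity)
      have s2 : (D * cConst n * ((n:ℝ) - 1) ^ (2*m) / ε ^ 2) * (cβ*cγ) *
          (CL^2 * (Real.log ε⁻¹)^2) ≤
          ((D * Cc * A ^ (2*m)) * Real.log ε⁻¹ * ε ^ (-(8:ℝ)/(4-(m:ℝ)))) * (cβ*cγ) *
            (CL^2 * (Real.log ε⁻¹)^2) := by
        apply mul_le_mul_of_nonneg_right (mul_le_mul_of_nonneg_right hKb (by positivity))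
        positivity
      exact s1.trans s2
    have hterm2 : cγ * ∑ l ∈ Finset.range (L+1), (Real.exp β)^l ≤
        C2 * (Real.log ε⁻¹ * ε ^ (-(8:ℝ)/(4-(m:ℝ))) * (Real.log ε⁻¹)^2) := by
      have hsq : (1:ℝ) ≤ (Real.log ε⁻¹)^2 := one_le_pow₀ hln
      have h4 : (1:ℝ) ≤ Real.log ε⁻¹ * (Real.log ε⁻¹)^2 := by
        have h5 := mul_le_mul hln hsq zero_le_one (zero_le_one.trans hln)
        linarith
      calc cγ * ∑ l ∈ Finset.range (L+1), (Real.exp β)^l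
          ≤ C2 * ε ^ ((-(4:ℝ)/(4-(m:ℝ))) * (β/α)) := hsum
        _ ≤ C2 * ε ^ (-(8:ℝ)/(4-(m:ℝ))) := mul_le_mul_of_nonneg_left hexp2 hC20.le
        _ ≤ C2 * ((Real.log ε⁻¹ * (Real.log ε⁻¹)^2) * ε ^ (-(8:ℝ)/(4-(m:ℝ)))) :=
            mul_le_mul_of_nonneg_left (le_mul_of_one_le_left hr8.le h4) hC20.le
        _ = C2 * (Real.log ε⁻¹ * ε ^ (-(8:ℝ)/(4-(m:ℝ))) * (Real.log ε⁻¹)^2) := by ring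
    calc ∑ l ∈ Finset.range (L + 1), (nSamples m α β β cβ cγ A B D ε l : ℝ) * (cγ * Real.exp (β * l))
        ≤ (D * cConst n * ((n:ℝ) - 1) ^ (2*m) / ε ^ 2) * (cβ*cγ) *
            (∑ l ∈ Finset.range (L + 1), (Real.exp ((β-β)/2))^l)^2
            + cγ * ∑ l ∈ Finset.range (L + 1), (Real.exp β)^l := hcore
      _ ≤ ((D * Cc * A ^ (2*m)) * Real.log ε⁻¹ * ε ^ (-(8:ℝ)/(4-(m:ℝ)))) * (cβ*cγ) *
            (CL^2 * (Real.log ε⁻¹)^2)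
            + C2 * (Real.log ε⁻¹ * ε ^ (-(8:ℝ)/(4-(m:ℝ))) * (Real.log ε⁻¹)^2) :=
          add_le_add hterm1 hterm2
      _ = (C1 * CL^2 + C2) * Real.log ε⁻¹ * ε ^ (-(8:ℝ)/(4-(m:ℝ))) * (Real.log ε⁻¹)^2 := by
          rw [hC1def]
          ring
  · -- β > γ
    set x : ℝ := Real.exp ((γ-β)/2) with hxdef
    have hx1 : x < 1 := by
      rw [hxdef, show (1:ℝ) = Real.exp 0 by rw [Real.exp_zero]]
      exact Real.exp_lt_exp.mpr (by linarith)
    have hx0 : 0 < x := Real.exp_pos _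
    set cG : ℝ := (1/(1-x))^2 with hcGdef
    have hcG0 : 0 < cG := by
      rw [hcGdef]
      exact pow_pos (div_pos one_pos (by linarith)) 2
    refine ⟨C1 * cG + C2, add_pos (mul_pos hC10 hcG0) hC20, ?_⟩
    rintro ε ⟨hε0, hεlt⟩
    have hε1 : ε ≤ 1 := by
      have : Real.exp (-1) < 1 := by
        rw [show (1:ℝ) = Real.exp 0 by rw [Real.exp_zero]]
        exact Real.exp_lt_exp.mpr (by norm_num)
      linarith
    have hln : 1 ≤ Real.log ε⁻¹ := by
      have h := Real.log_lt_log hε0 hεlt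
      rw [Real.log_exp] at h
      rw [Real.log_inv]
      linarith
    rw [if_pos hgt, hrw]
    have hmin : min β γ = γ := min_eq_right hgt.le
    have hγ2α : γ ≤ 2*α := by rw [hmin] at h2α; linarith
    have hexp2 : ε ^ ((-(4:ℝ)/(4-(m:ℝ))) * (γ/α)) ≤ ε ^ (-(8:ℝ)/(4-(m:ℝ))) := by
      apply Real.rpow_le_rpow_of_exponent_ge hε0 hε1
      rw [show (-(4:ℝ)/(4-(m:ℝ))) * (γ/α) = (-4*γ)/((4-(m:ℝ))*α) from div_mul_div_comm _ _ _ _,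
        show -(8:ℝ)/(4-(m:ℝ)) = (-8*α)/((4-(m:ℝ))*α) by
          rw [div_eq_div_iff hσne (by positivity)]; ring,
        div_le_div_iff₀ (by positivity) (by positivity)]
      apply mul_le_mul_of_nonneg_right _ (by positivity)
      linarith
    have hr8 : (0:ℝ) < ε ^ (-(8:ℝ)/(4-(m:ℝ))) := Real.rpow_pos_of_pos hε0 _
    have hcore := cost_core (m := m) (α := α) (β := β) (γ := γ) (cβ := cβ) (cγ := cγ)
      (A := A) (B := B) (D := D) (ε := ε) hα hcβ hcγ hA hB hD hε0 hε1 hm3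
    have hKb := K_le (m := m) (A := A) (D := D) (ε := ε) hA hD hε0 hε1 hln hm3
    rw [← hCcdef] at hKb
    have hsum := sumexp_le (m := m) (α := α) (γ := γ) (cγ := cγ) (A := A) (B := B) (ε := ε)
      hα hγ hcγ hA hB hε0 hε1 hm3
    rw [← hMdef, ← hC2def] at hsum
    set n := nNodes m A ε with hndef
    set L := nLevels m α A B ε with hLdef
    set G := ∑ l ∈ Finset.range (L + 1), (Real.exp ((γ-β)/2))^l with hGdef
    have hG0 : 0 ≤ G := Finset.sum_nonneg fun l _ => by positivity
    have hGle : G ≤ 1/(1-x) := by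
      have hGx : G = ∑ l ∈ Finset.range (L+1), x ^ l := by rw [hGdef, hxdef]
      rw [hGx]
      exact geom_le_one x hx0.le hx1 (L+1)
    have hG2 : G^2 ≤ cG := by
      rw [hcGdef]
      exact pow_le_pow_left₀ hG0 hGle 2
    have hK0 : 0 ≤ D * cConst n * ((n:ℝ) - 1) ^ (2*m) / ε ^ 2 := by
      have h1 := cConst_nonneg n
      have h2 : (0:ℝ) ≤ ((n:ℝ)-1) ^ (2*m) := by rw [pow_mul]; positivity
      apply div_nonneg _ (by positivity)
      positivity
    have hterm1 : (D * cConst n * ((n:ℝ) - 1) ^ (2*m) / ε ^ 2) * (cβ*cγ) * G^2 ≤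
        ((D * Cc * A ^ (2*m)) * Real.log ε⁻¹ * ε ^ (-(8:ℝ)/(4-(m:ℝ)))) * (cβ*cγ) * cG := by
      have s1 := mul_le_mul_of_nonneg_left hG2
        (show (0:ℝ) ≤ (D * cConst n * ((n:ℝ) - 1) ^ (2*m) / ε ^ 2) * (cβ*cγ) by positivity)
      have s2 : (D * cConst n * ((n:ℝ) - 1) ^ (2*m) / ε ^ 2) * (cβ*cγ) * cG ≤
          ((D * Cc * A ^ (2*m)) * Real.log ε⁻¹ * ε ^ (-(8:ℝ)/(4-(m:ℝ)))) * (cβ*cγ) * cG := by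
        apply mul_le_mul_of_nonneg_right (mul_le_mul_of_nonneg_right hKb (by positivity))
        exact hcG0.le
      exact s1.trans s2
    have hterm2 : cγ * ∑ l ∈ Finset.range (L+1), (Real.exp γ)^l ≤
        C2 * (Real.log ε⁻¹ * ε ^ (-(8:ℝ)/(4-(m:ℝ)))) := by
      calc cγ * ∑ l ∈ Finset.range (L+1), (Real.exp γ)^l
          ≤ C2 * ε ^ ((-(4:ℝ)/(4-(m:ℝ))) * (γ/α)) := hsum
        _ ≤ C2 * ε ^ (-(8:ℝ)/(4-(m:ℝ))) := mul_le_mul_of_nonneg_left hexp2 hC20.le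
        _ ≤ C2 * (Real.log ε⁻¹ * ε ^ (-(8:ℝ)/(4-(m:ℝ)))) :=
            mul_le_mul_of_nonneg_left (le_mul_of_one_le_left hr8.le hln) hC20.le
    calc ∑ l ∈ Finset.range (L + 1), (nSamples m α β γ cβ cγ A B D ε l : ℝ) * (cγ * Real.exp (γ * l))
        ≤ (D * cConst n * ((n:ℝ) - 1) ^ (2*m) / ε ^ 2) * (cβ*cγ) * G^2
            + cγ * ∑ l ∈ Finset.range (L + 1), (Real.exp γ)^l := hcore
      _ ≤ ((D * Cc * A ^ (2*m)) * Real.log ε⁻¹ * ε ^ (-(8:ℝ)/(4-(m:ℝ)))) * (cβ*cγ) * cG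
            + C2 * (Real.log ε⁻¹ * ε ^ (-(8:ℝ)/(4-(m:ℝ)))) := add_le_add hterm1 hterm2
      _ = (C1 * cG + C2) * Real.log ε⁻¹ * ε ^ (-(8:ℝ)/(4-(m:ℝ))) * 1 := by
          rw [hC1def]
          ring
end

section
/- Let Θ = [a, b] with a < b, let ψ₁, …, ψ_n : Θ → ℝ be twice continuously differentiable and linearly independent functions, and let k₀ > 0, k₁ ≥ 0, k₂ ≥ 0. Then there exists λ > 0 such that for every square-integrable random vector X : Ω → ℝⁿ on a probability space (Ω, 𝔉, ℙ), Σ_{m=0}^{2} k_m · E[ sup_{θ∈Θ} | Σ_{i=1}^n X_i ψ_i^{(m)}(θ) |² ] ≥ (λ / (b - a)) · E[ Σ_{i=1}^n X_i² ], where ψ_i^{(0)} = ψ_i, ψ_i^{(1)} and ψ_i^{(2)} denote first and second derivatives. -/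
open MeasureTheory Real

/-- Lower bound for a weighted combination of sup-norm statistical errors in terms of the
second moment of the coefficient vector: the Gram matrix of linearly independent C² functions
is positive definite with least eigenvalue `λ > 0`. -/
theorem stmt1 (a b : ℝ) (hab : a < b) (n : ℕ)
    (ψ : Fin n → ℝ → ℝ)
    (hψ : ∀ i, ContDiff ℝ 2 (ψ i))
    (hind : LinearIndependent ℝ (fun i => (Set.Icc a b).restrict (ψ i)))
    (k₀ k₁ k₂ : ℝ) (hk₀ : 0 < k₀) (hk₁ : 0 ≤ k₁) (hk₂ : 0 ≤ k₂) :
    ∃ lam > (0 : ℝ), ∀ (Ω : Type) (_ : MeasurableSpace Ω) (P : Measure Ω),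
      IsProbabilityMeasure P → ∀ X : Ω → Fin n → ℝ, MemLp X 2 P →
        k₀ * ∫ ω, (⨆ θ : Set.Icc a b, |∑ i, X ω i * ψ i (θ : ℝ)|) ^ 2 ∂P
          + k₁ * ∫ ω, (⨆ θ : Set.Icc a b, |∑ i, X ω i * deriv (ψ i) (θ : ℝ)|) ^ 2 ∂P
          + k₂ * ∫ ω, (⨆ θ : Set.Icc a b, |∑ i, X ω i * deriv (deriv (ψ i)) (θ : ℝ)|) ^ 2 ∂P
        ≥ (lam / (b - a)) * ∫ ω, ∑ i, (X ω i) ^ 2 ∂P := by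
  have hba : (0:ℝ) < b - a := sub_pos.mpr hab
  -- the linear map into continuous functions on [a,b]
  let T : (Fin n → ℝ) →ₗ[ℝ] C(Set.Icc a b, ℝ) :=
    { toFun := fun x => ⟨fun θ => ∑ i, x i * ψ i θ,
        continuous_finset_sum _ fun i _ =>
          continuous_const.mul ((hψ i).continuous.comp continuous_subtype_val)⟩
      map_add' := by
        intro x y; ext θ
        simp [add_mul, Finset.sum_add_distrib]
      map_smul' := by
        intro c x; ext θ
        simp [Finset.mul_sum, mul_assoc] }
  have hTker : LinearMap.ker T = ⊥ := by
    rw [LinearMap.ker_eq_bot']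
    intro x hx
    have hz : ∀ θ : Set.Icc a b, ∑ i, x i * ψ i θ = 0 := by
      intro θ
      have := congrArg (fun f : C(Set.Icc a b, ℝ) => f θ) hx
      simpa [T] using this
    have := Fintype.linearIndependent_iff.mp hind x ?_
    · funext i; exact this i
    · funext θ
      simpa [Set.restrict] using hz θ
  obtain ⟨K, hKpos, hA⟩ := T.exists_antilipschitzWith hTker
  have hKR : (0:ℝ) < (K:ℝ) := hKpos
  -- constant
  set c : ℝ := 1 / ((n + 1) * (K:ℝ) ^ 2) with hc
  have hcpos : 0 < c := by
    apply one_div_pos.mpr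
    positivity
  -- sup equals norm
  have hsup : ∀ x : Fin n → ℝ,
      (⨆ θ : Set.Icc a b, |∑ i, x i * ψ i (θ : ℝ)|) = ‖T x‖ := by
    intro x
    rw [ContinuousMap.norm_eq_iSup_norm]
    simp only [Real.norm_eq_abs]
    rfl
  -- pointwise lower bound
  have hpt : ∀ x : Fin n → ℝ,
      c * ∑ i, (x i) ^ 2 ≤ (⨆ θ : Set.Icc a b, |∑ i, x i * ψ i (θ : ℝ)|) ^ 2 := by
    intro x
    rw [hsup x]
    have h1 : ‖x‖ ≤ (K:ℝ) * ‖T x‖ := by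
      have := hA.le_mul_dist x 0
      simpa [dist_eq_norm] using this
    have h2 : ∑ i, (x i) ^ 2 ≤ (n + 1) * ‖x‖ ^ 2 := by
      calc ∑ i, (x i) ^ 2 ≤ ∑ _i : Fin n, ‖x‖ ^ 2 := by
            apply Finset.sum_le_sum
            intro i _
            have : |x i| ≤ ‖x‖ := by
              simpa [Real.norm_eq_abs] using norm_le_pi_norm x i
            calc (x i) ^ 2 = |x i| ^ 2 := (sq_abs _).symm
              _ ≤ ‖x‖ ^ 2 := by
                  apply pow_le_pow_left₀ (abs_nonneg _) this
        _ = n * ‖x‖ ^ 2 := by simp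
        _ ≤ (n + 1) * ‖x‖ ^ 2 := by nlinarith [sq_nonneg ‖x‖]
    have h3 : ‖x‖ ^ 2 ≤ (K:ℝ) ^ 2 * ‖T x‖ ^ 2 := by
      calc ‖x‖ ^ 2 ≤ ((K:ℝ) * ‖T x‖) ^ 2 := by
            apply pow_le_pow_left₀ (norm_nonneg _) h1
        _ = (K:ℝ) ^ 2 * ‖T x‖ ^ 2 := by ring
    rw [hc]
    rw [div_mul_eq_mul_div, one_mul, div_le_iff₀ (by positivity)]
    calc ∑ i, (x i) ^ 2 ≤ (n + 1) * ‖x‖ ^ 2 := h2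
      _ ≤ (n + 1) * ((K:ℝ) ^ 2 * ‖T x‖ ^ 2) := by
          apply mul_le_mul_of_nonneg_left h3 (by positivity)
      _ = ‖T x‖ ^ 2 * ((n + 1) * (K:ℝ) ^ 2) := by ring
  -- choose lambda
  refine ⟨k₀ * c * (b - a), by positivity, ?_⟩
  intro Ω _ P hP X hX
  -- T as a continuous linear map
  let Tc : (Fin n → ℝ) →L[ℝ] C(Set.Icc a b, ℝ) := LinearMap.toContinuousLinearMap T
  -- integrability of the sum of squares
  have hgi : Integrable (fun ω => ∑ i, (X ω i) ^ 2) P := by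
    apply integrable_finset_sum
    intro i _
    have hXi : MemLp (fun ω => X ω i) 2 P := by
      have := (ContinuousLinearMap.proj (R := ℝ) (φ := fun _ : Fin n => ℝ) i).comp_memLp' hX
      exact this
    exact hXi.integrable_sq
  -- integrability of the squared sup
  have hfi : Integrable (fun ω => (⨆ θ : Set.Icc a b, |∑ i, X ω i * ψ i (θ : ℝ)|) ^ 2) P := by
    have hcomp : MemLp (fun ω => ‖Tc (X ω)‖) 2 P := (Tc.comp_memLp' hX).norm
    have := hcomp.integrable_sq
    apply this.congr
    filter_upwards with ω
    rw [hsup (X ω)]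
    norm_num
    rfl
  -- main inequality for the first term
  have hmain : ∫ ω, (⨆ θ : Set.Icc a b, |∑ i, X ω i * ψ i (θ : ℝ)|) ^ 2 ∂P
      ≥ c * ∫ ω, ∑ i, (X ω i) ^ 2 ∂P := by
    rw [← integral_const_mul]
    exact integral_mono (hgi.const_mul c) hfi (fun ω => hpt (X ω))
  have hg0 : 0 ≤ ∫ ω, ∑ i, (X ω i) ^ 2 ∂P :=
    integral_nonneg fun ω => Finset.sum_nonneg fun i _ => sq_nonneg _
  have h1nn : 0 ≤ ∫ ω, (⨆ θ : Set.Icc a b, |∑ i, X ω i * deriv (ψ i) (θ : ℝ)|) ^ 2 ∂P :=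
    integral_nonneg fun ω => sq_nonneg _
  have h2nn : 0 ≤ ∫ ω, (⨆ θ : Set.Icc a b, |∑ i, X ω i * deriv (deriv (ψ i)) (θ : ℝ)|) ^ 2 ∂P :=
    integral_nonneg fun ω => sq_nonneg _
  have hl : (k₀ * c * (b - a)) / (b - a) = k₀ * c := by
    field_simp
  rw [hl]
  have : k₀ * c * ∫ ω, ∑ i, (X ω i) ^ 2 ∂P
      ≤ k₀ * ∫ ω, (⨆ θ : Set.Icc a b, |∑ i, X ω i * ψ i (θ : ℝ)|) ^ 2 ∂P := by
    rw [mul_assoc]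
    exact mul_le_mul_of_nonneg_left hmain hk₀.le
  nlinarith [mul_nonneg hk₁ h1nn, mul_nonneg hk₂ h2nn]
end

section
/- Let Θ = [a, b] with a < b, let Φ : Θ → ℝ be twice continuously differentiable with Φ'' nonvanishing on Θ, and let G : Θ → ℝ be differentiable. Suppose q, q̂ ∈ Θ satisfy Φ'(q) = 0 and G'(q̂) = 0, and write I = [min(q,q̂), max(q,q̂)]. Then | G(q̂) - Φ(q) |² ≤ 2 ( sup_{ζ∈I} |Φ'(ζ)| )² ( sup_{ξ∈I} 1/|Φ''(ξ)| )² · | G'(q̂) - Φ'(q̂) |² + 2 | G(q̂) - Φ(q̂) |². -/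
open Set

/-- Deterministic core of the CVaR error bound: the error of `G(q̂)` with respect to the
minimum value `Φ(q)` is controlled by the errors on `Φ'` and on `Φ` itself. -/
theorem stmt3 (a b : ℝ) (hab : a < b) (Φ G : ℝ → ℝ)
    (hΦ : ContDiff ℝ 2 Φ)
    (hΦ'' : ∀ ξ ∈ Set.Icc a b, deriv (deriv Φ) ξ ≠ 0)
    (hG : Differentiable ℝ G)
    (q qh : ℝ) (hq : q ∈ Set.Icc a b) (hqh : qh ∈ Set.Icc a b)
    (hΦq : deriv Φ q = 0) (hGqh : deriv G qh = 0) :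
    |G qh - Φ q| ^ 2 ≤
      2 * (⨆ ζ : Set.uIcc q qh, |deriv Φ (ζ : ℝ)|) ^ 2 *
          (⨆ ξ : Set.uIcc q qh, 1 / |deriv (deriv Φ) (ξ : ℝ)|) ^ 2 *
          |deriv G qh - deriv Φ qh| ^ 2
        + 2 * |G qh - Φ qh| ^ 2 := by
  have hIab : Set.uIcc q qh ⊆ Set.Icc a b := Set.uIcc_subset_Icc hq hqh
  have hΦd : Differentiable ℝ Φ := hΦ.differentiable (by norm_num)
  have hΦ'cd : ContDiff ℝ 1 (deriv Φ) := by
    have h2 : ContDiff ℝ ((1 : ℕ) + 1) Φ := by norm_num; exact hΦ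
    exact ((contDiff_succ_iff_deriv).mp h2).2.2
  have hΦ'd : Differentiable ℝ (deriv Φ) := hΦ'cd.differentiable one_ne_zero
  have hΦ'c : Continuous (deriv Φ) := hΦ'd.continuous
  have hΦ''c : Continuous (deriv (deriv Φ)) := hΦ'cd.continuous_deriv le_rfl
  set S1 := (⨆ ζ : Set.uIcc q qh, |deriv Φ (ζ : ℝ)|) with hS1
  set S2 := (⨆ ξ : Set.uIcc q qh, 1 / |deriv (deriv Φ) (ξ : ℝ)|) with hS2
  -- boundedness of the two sup families
  have hbdd1 : BddAbove (Set.range fun ζ : Set.uIcc q qh => |deriv Φ (ζ : ℝ)|) := by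
    rw [show (Set.range fun ζ : Set.uIcc q qh => |deriv Φ (ζ : ℝ)|)
        = (fun x => |deriv Φ x|) '' Set.uIcc q qh from
        Set.range_restrict (fun x => |deriv Φ x|) (Set.uIcc q qh)]
    exact (isCompact_uIcc.image (hΦ'c.abs)).bddAbove
  have hcont2 : ContinuousOn (fun x => 1 / |deriv (deriv Φ) x|) (Set.uIcc q qh) := by
    apply ContinuousOn.div continuousOn_const (hΦ''c.abs.continuousOn)
    intro x hx
    exact abs_ne_zero.mpr (hΦ'' x (hIab hx))
  have hbdd2 : BddAbove (Set.range fun ξ : Set.uIcc q qh => 1 / |deriv (deriv Φ) (ξ : ℝ)|) := by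
    rw [show (Set.range fun ξ : Set.uIcc q qh => 1 / |deriv (deriv Φ) (ξ : ℝ)|)
        = (fun x => 1 / |deriv (deriv Φ) x|) '' Set.uIcc q qh from
        Set.range_restrict (fun x => 1 / |deriv (deriv Φ) x|) (Set.uIcc q qh)]
    exact (isCompact_uIcc.image_of_continuousOn hcont2).bddAbove
  have hle1 : ∀ x ∈ Set.uIcc q qh, |deriv Φ x| ≤ S1 := fun x hx =>
    le_ciSup hbdd1 (⟨x, hx⟩ : Set.uIcc q qh)
  have hle2 : ∀ x ∈ Set.uIcc q qh, 1 / |deriv (deriv Φ) x| ≤ S2 := fun x hx =>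
    le_ciSup hbdd2 (⟨x, hx⟩ : Set.uIcc q qh)
  have hS1nn : 0 ≤ S1 := le_trans (abs_nonneg _) (hle1 q Set.left_mem_uIcc)
  have hS2nn : 0 ≤ S2 := le_trans (by positivity) (hle2 q Set.left_mem_uIcc)
  -- MVT for deriv Φ: |qh - q| ≤ S2 * |deriv Φ qh|
  have key : ∀ u v : ℝ, u < v → u ∈ Set.uIcc q qh → v ∈ Set.uIcc q qh →
      |v - u| ≤ S2 * |deriv Φ v - deriv Φ u| := by
    intro u v huv hu hv
    obtain ⟨c, hc, hc'⟩ := exists_hasDerivAt_eq_slope (deriv Φ) (deriv (deriv Φ)) huv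
      hΦ'c.continuousOn (fun x _ => (hΦ'd x).hasDerivAt)
    have hcI : c ∈ Set.uIcc q qh := by
      have hsub : Set.Icc u v ⊆ Set.uIcc q qh := Set.ordConnected_uIcc.out hu hv
      exact hsub (Set.Ioo_subset_Icc_self hc)
    have hne : deriv (deriv Φ) c ≠ 0 := hΦ'' c (hIab hcI)
    have heq : deriv Φ v - deriv Φ u = deriv (deriv Φ) c * (v - u) := by
      have hvu : v - u ≠ 0 := sub_ne_zero.mpr huv.ne'
      rw [hc']
      field_simp
    have : |deriv Φ v - deriv Φ u| = |deriv (deriv Φ) c| * |v - u| := by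
      rw [heq, abs_mul]
    have habs : 0 < |deriv (deriv Φ) c| := abs_pos.mpr hne
    have h1 : |v - u| = (1 / |deriv (deriv Φ) c|) * |deriv Φ v - deriv Φ u| := by
      rw [this]; field_simp
    rw [h1]
    exact mul_le_mul_of_nonneg_right (hle2 c hcI) (abs_nonneg _)
  have hdist : |qh - q| ≤ S2 * |deriv Φ qh| := by
    rcases lt_trichotomy q qh with h | h | h
    · have := key q qh h Set.left_mem_uIcc Set.right_mem_uIcc
      rwa [hΦq, sub_zero] at this
    · subst h
      rw [sub_self, abs_zero]
      positivity
    · have := key qh q h Set.right_mem_uIcc Set.left_mem_uIcc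
      rw [hΦq, zero_sub, abs_neg] at this
      rwa [abs_sub_comm] at this
  -- mean value inequality for Φ
  have hΦdiff : |Φ qh - Φ q| ≤ S1 * |qh - q| := by
    have := Convex.norm_image_sub_le_of_norm_deriv_le
      (f := Φ) (s := Set.uIcc q qh) (C := S1)
      (fun x _ => hΦd x)
      (fun x hx => by simpa [Real.norm_eq_abs] using hle1 x hx)
      (convex_uIcc q qh) Set.left_mem_uIcc Set.right_mem_uIcc
    simpa [Real.norm_eq_abs] using this
  have hE : |deriv G qh - deriv Φ qh| = |deriv Φ qh| := by
    rw [hGqh, zero_sub, abs_neg]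
  have hchain : |Φ qh - Φ q| ≤ S1 * S2 * |deriv G qh - deriv Φ qh| := by
    rw [hE]
    calc |Φ qh - Φ q| ≤ S1 * |qh - q| := hΦdiff
    _ ≤ S1 * (S2 * |deriv Φ qh|) := mul_le_mul_of_nonneg_left hdist hS1nn
    _ = S1 * S2 * |deriv Φ qh| := by ring
  have htri : |G qh - Φ q| ≤ |G qh - Φ qh| + |Φ qh - Φ q| := by
    have := abs_sub_le (G qh) (Φ qh) (Φ q)
    linarith
  have h0 : 0 ≤ |G qh - Φ q| := abs_nonneg _
  nlinarith [sq_nonneg (|Φ qh - Φ q| - |G qh - Φ qh|), abs_nonneg (G qh - Φ qh),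
    abs_nonneg (Φ qh - Φ q), abs_nonneg (deriv G qh - deriv Φ qh),
    mul_le_mul hchain hchain (abs_nonneg _) (by positivity : (0:ℝ) ≤ S1 * S2 * |deriv G qh - deriv Φ qh|),
    sq_nonneg (|G qh - Φ qh| + |Φ qh - Φ q|), mul_self_nonneg (|G qh - Φ q|)]
end
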